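/- arXiv:2306.10784 — 3 statements merged into one kernel-verified Lean document; each statement's English description precedes it below -/
import Mathlib

section
/- If D1 and D2 are digraphs and D is an Ore-composition of D1 and D2, then T(D) ≥ T(D1) + T(D2) - 2. Moreover, if D1 or D2 is isomorphic to the bidirected K4, then T(D) ≥ T(D1) + T(D2) - 1. -/
/-- A (finite) digraph on vertices drawn from `ℕ`. -/
structure Dgr where
  verts : Finset ℕ
  Adj : ℕ → ℕ → Prop
  adj_mem : ∀ ⦃u v : ℕ⦄, Adj u v → u ∈ verts ∧ v ∈ verts
  adj_irrefl : ∀ v, ¬ Adj v v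

namespace Dgr

/-- number of vertices -/
def nV (D : Dgr) : ℕ := D.verts.card

/-- number of arcs -/
noncomputable def nA (D : Dgr) : ℕ := {p : ℕ × ℕ | D.Adj p.1 p.2}.ncard

/-- subdigraph relation -/
def Subd (H D : Dgr) : Prop := H.verts ⊆ D.verts ∧ ∀ ⦃u v : ℕ⦄, H.Adj u v → D.Adj u v

def ProperSubd (H D : Dgr) : Prop := Subd H D ∧ ¬ Subd D H

/-- a relation is acyclic: no directed cycle through any vertex -/
def Acy (R : ℕ → ℕ → Prop) : Prop := ∀ v, ¬ Relation.TransGen R v v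

/-- a `k`-dicolouring: each colour class induces an acyclic subdigraph -/
def IsDicol (D : Dgr) {k : ℕ} (φ : ℕ → Fin k) : Prop :=
  Acy (fun u v => D.Adj u v ∧ φ u = φ v)

def Dicolourable (D : Dgr) (k : ℕ) : Prop := ∃ φ : ℕ → Fin k, D.IsDicol φ

/-- the dichromatic number -/
noncomputable def dichr (D : Dgr) : ℕ := sInf {k | D.Dicolourable k}

/-- `k`-dicritical digraphs -/
def Dicritical (k : ℕ) (D : Dgr) : Prop :=
  D.dichr = k ∧ ∀ H : Dgr, ProperSubd H D → H.dichr < k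

def Bidirected (D : Dgr) : Prop := ∀ ⦃u v : ℕ⦄, D.Adj u v → D.Adj v u

def Oriented (D : Dgr) : Prop := ∀ ⦃u v : ℕ⦄, D.Adj u v → ¬ D.Adj v u

/-- being a bidirected complete digraph on `n` vertices -/
def IsBidirComplete (n : ℕ) (D : Dgr) : Prop :=
  D.verts.card = n ∧ ∀ u ∈ D.verts, ∀ v ∈ D.verts, u ≠ v → D.Adj u v

/-- a packing of digons (2-sets) and bidirected triangles (3-sets) -/
def IsPacking (D : Dgr) (P : Finset (Finset ℕ)) : Prop :=
  (∀ s ∈ P, (s.card = 2 ∨ s.card = 3) ∧ s ⊆ D.verts ∧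
      ∀ u ∈ s, ∀ v ∈ s, u ≠ v → D.Adj u v) ∧
  (P : Set (Finset ℕ)).Pairwise Disjoint

/-- `T(D)`: the maximum of `d + 2t` over packings of `d` digons and `t` bidirected
triangles; a digon contributes `card - 1 = 1`, a triangle `card - 1 = 2`. -/
noncomputable def TT (D : Dgr) : ℕ :=
  sSup {t | ∃ P : Finset (Finset ℕ), D.IsPacking P ∧ t = ∑ s ∈ P, (s.card - 1)}

/-- vertex deletion -/
def del (D : Dgr) (x : ℕ) : Dgr where
  verts := D.verts.erase x
  Adj u v := D.Adj u v ∧ u ≠ x ∧ v ≠ x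
  adj_mem := by
    intro u v h
    exact ⟨Finset.mem_erase.2 ⟨h.2.1, (D.adj_mem h.1).1⟩,
           Finset.mem_erase.2 ⟨h.2.2, (D.adj_mem h.1).2⟩⟩
  adj_irrefl := fun v h => D.adj_irrefl v h.1

/-- induced subdigraph on a set `S` of vertices -/
def induce (D : Dgr) (S : Finset ℕ) : Dgr where
  verts := D.verts ∩ S
  Adj u v := D.Adj u v ∧ u ∈ S ∧ v ∈ S
  adj_mem := by
    intro u v h
    exact ⟨Finset.mem_inter.2 ⟨(D.adj_mem h.1).1, h.2.1⟩,
           Finset.mem_inter.2 ⟨(D.adj_mem h.1).2, h.2.2⟩⟩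
  adj_irrefl := fun v h => D.adj_irrefl v h.1

/-- adding a digon between two (distinct, existing) vertices -/
def addDigon (D : Dgr) (x y : ℕ) : Dgr where
  verts := D.verts
  Adj u v := D.Adj u v ∨
    (x ≠ y ∧ x ∈ D.verts ∧ y ∈ D.verts ∧ ((u = x ∧ v = y) ∨ (u = y ∧ v = x)))
  adj_mem := by
    intro u v h
    rcases h with h | ⟨_, hx, hy, h | h⟩
    · exact D.adj_mem h
    · exact ⟨h.1 ▸ hx, h.2 ▸ hy⟩
    · exact ⟨h.1 ▸ hy, h.2 ▸ hx⟩
  adj_irrefl := by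
    intro v h
    rcases h with h | ⟨hxy, _, _, h | h⟩
    · exact D.adj_irrefl v h
    · exact hxy (h.1.symm.trans h.2)
    · exact hxy (h.2.symm.trans h.1)

/-- removing the digon `[x,y]` (both arcs) -/
def delDigon (D : Dgr) (x y : ℕ) : Dgr where
  verts := D.verts
  Adj u v := D.Adj u v ∧ ¬(u = x ∧ v = y) ∧ ¬(u = y ∧ v = x)
  adj_mem := by intro u v h; exact D.adj_mem h.1
  adj_irrefl := fun v h => D.adj_irrefl v h.1

/-- `D` is an Ore-composition of `D1` (digon side, replaced digon `[x,y]`) and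
`D2` (split side, split vertex `z`). -/
def IsOreComp (D1 D2 D : Dgr) : Prop :=
  Bidirected D1 ∧ Bidirected D2 ∧ Disjoint D1.verts D2.verts ∧
  ∃ (x y z : ℕ) (Z1 Z2 : Set ℕ),
    x ∈ D1.verts ∧ y ∈ D1.verts ∧ x ≠ y ∧ D1.Adj x y ∧
    z ∈ D2.verts ∧
    Z1 ∪ Z2 = {w | D2.Adj z w} ∧ Disjoint Z1 Z2 ∧ Z1.Nonempty ∧ Z2.Nonempty ∧
    D.verts = D1.verts ∪ D2.verts.erase z ∧
    (∀ u v, D.Adj u v ↔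
      (D1.Adj u v ∧ ¬(u = x ∧ v = y) ∧ ¬(u = y ∧ v = x)) ∨
      (D2.Adj u v ∧ u ≠ z ∧ v ≠ z) ∨
      (u = x ∧ v ∈ Z1 ∧ D2.Adj z v) ∨ (v = x ∧ u ∈ Z1 ∧ D2.Adj u z) ∨
      (u = y ∧ v ∈ Z2 ∧ D2.Adj z v) ∨ (v = y ∧ u ∈ Z2 ∧ D2.Adj u z))

/-- degree of a vertex: in-degree plus out-degree -/
noncomputable def deg (D : Dgr) (v : ℕ) : ℕ :=
  {u | D.Adj v u}.ncard + {u | D.Adj u v}.ncard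

end Dgr

open Dgr

/-- the class of 4-Ore digraphs -/
inductive IsOre4 : Dgr → Prop
  | k4 : ∀ D : Dgr, IsBidirComplete 4 D → IsOre4 D
  | comp : ∀ D1 D2 D : Dgr, IsOre4 D1 → IsOre4 D2 → IsOreComp D1 D2 D → IsOre4 D

namespace Dgr

/-- an emerald: a bidirected triangle all of whose vertices have degree 6 in `D` -/
def IsEmerald (D : Dgr) (s : Finset ℕ) : Prop :=
  s.card = 3 ∧ s ⊆ D.verts ∧ (∀ u ∈ s, ∀ v ∈ s, u ≠ v → D.Adj u v) ∧
  ∀ v ∈ s, D.deg v = 6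

/-- a diamond: a bidirected `K4` minus a digon `[x,y]`, the two other vertices
having degree 6 in `D` -/
def IsDiamond (D : Dgr) (s : Finset ℕ) : Prop :=
  s.card = 4 ∧ s ⊆ D.verts ∧ ∃ x ∈ s, ∃ y ∈ s, x ≠ y ∧
    (∀ u ∈ s, ∀ v ∈ s, u ≠ v → ¬(u = x ∧ v = y) → ¬(u = y ∧ v = x) → D.Adj u v) ∧
    (∀ v ∈ s, v ≠ x → v ≠ y → D.deg v = 6)

/-- boundary of an induced subdigraph given by its vertex set `S` -/
def bdry (D : Dgr) (S : Finset ℕ) : Set ℕ :=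
  {v | v ∈ S ∧ ∃ u ∈ D.verts, u ∉ S ∧ (D.Adj u v ∨ D.Adj v u)}

/-- Ore-collapsible induced subdigraph, given by its vertex set -/
def OreCollapsible (D : Dgr) (S : Finset ℕ) : Prop :=
  S ⊆ D.verts ∧ S.card < D.verts.card ∧
  ∃ u v : ℕ, u ≠ v ∧ D.bdry S = {u, v} ∧ IsOre4 ((D.induce S).addDigon u v)

/-- the potential of a digraph, with respect to parameters ε and δ -/
noncomputable def pot (D : Dgr) (ε δ : ℝ) : ℝ :=
  (10/3 + ε) * (D.nV : ℝ) - (D.nA : ℝ) - δ * (D.TT : ℝ)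

end Dgr

/-! In optimal packings of `D1` and `D2`, deleting the digon `[x,y]` only damages the block
through `x`, and splitting `z` only the block through `z`; dropping `x`, resp. `z`, from that
block costs one unit each. If `D1` is the bidirected `K4`, the block through `z` is instead
rerouted through `x` and `y` along the partition `(Z1, Z2)` at no cost, and the two vertices
of `D1` other than `x, y` still form a digon; if `D2` is `K4`, then `D2 - z` is a bidirected
triangle of `D`. Either way `T(K4) ≤ 2` finishes the count. -/

namespace Dgr

def IsClique (D : Dgr) (s : Finset ℕ) : Prop :=
  s ⊆ D.verts ∧ ∀ u ∈ s, ∀ v ∈ s, u ≠ v → D.Adj u v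

def packValue (P : Finset (Finset ℕ)) : ℕ := ∑ s ∈ P, (s.card - 1)

def cliqueBlock (s : Finset ℕ) : Finset (Finset ℕ) := if 2 ≤ s.card then {s} else ∅

variable {D D' D1 D2 : Dgr} {P Q : Finset (Finset ℕ)} {s A : Finset ℕ} {v x : ℕ}

theorem IsClique.subset (hs : D.IsClique s) (hA : A ⊆ s) : D.IsClique A :=
  ⟨hA.trans hs.1, fun u hu w hw => hs.2 u (hA hu) w (hA hw)⟩

theorem IsClique.insert (hA : D.IsClique A) (hx : x ∈ D.verts)
    (hadj : ∀ a ∈ A, D.Adj x a ∧ D.Adj a x) : D.IsClique (insert x A) := by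
  refine ⟨Finset.insert_subset hx hA.1, ?_⟩
  simp only [Finset.mem_insert]
  rintro _ (rfl | hu) _ (rfl | hw) huw
  · exact absurd rfl huw
  · exact (hadj _ hw).1
  · exact (hadj _ hu).2
  · exact hA.2 _ hu _ hw huw

theorem IsClique.of_subd_del (hsub : (D'.del v).Subd D) (hs : D'.IsClique s) (hv : v ∉ s) :
    D.IsClique s :=
  ⟨fun _ hu => hsub.1 (Finset.mem_erase.2 ⟨fun h => hv (h ▸ hu), hs.1 hu⟩),
    fun u hu w hw huw => hsub.2
      ⟨hs.2 u hu w hw huw, fun h => hv (h ▸ hu), fun h => hv (h ▸ hw)⟩⟩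

theorem IsBidirComplete.isClique {n : ℕ} (hK : IsBidirComplete n D) (hs : s ⊆ D.verts) :
    D.IsClique s :=
  ⟨hs, fun u hu w hw => hK.2 u (hs hu) w (hs hw)⟩

theorem IsPacking.subset (hP : D.IsPacking P) (hQ : Q ⊆ P) : D.IsPacking Q :=
  ⟨fun s hs => hP.1 s (hQ hs), hP.2.mono (by simpa using hQ)⟩

theorem IsPacking.of_subd_del (hP : D'.IsPacking P) (hsub : (D'.del v).Subd D)
    (hv : ∀ s ∈ P, v ∉ s) : D.IsPacking P :=
  ⟨fun s hs => ⟨(hP.1 s hs).1, IsClique.of_subd_del hsub (hP.1 s hs).2 (hv s hs)⟩,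
    hP.2⟩

theorem IsPacking.union (hP : D.IsPacking P) (hQ : D.IsPacking Q)
    (hPQ : ∀ s ∈ P, ∀ t ∈ Q, Disjoint s t) : D.IsPacking (P ∪ Q) := by
  refine ⟨fun s hs => (Finset.mem_union.1 hs).elim (hP.1 s) (hQ.1 s), ?_⟩
  rw [Finset.coe_union, Set.pairwise_union]
  exact ⟨hP.2, hQ.2, fun s hs t ht _ => ⟨hPQ s hs t ht, (hPQ s hs t ht).symm⟩⟩

theorem packValue_union (hP : D.IsPacking P) (hPQ : ∀ s ∈ P, ∀ t ∈ Q, Disjoint s t) :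
    packValue (P ∪ Q) = packValue P + packValue Q := by
  refine Finset.sum_union (Finset.disjoint_left.2 fun s hsP hsQ => ?_)
  have hs : s = ∅ := disjoint_self.1 (hPQ s hsP s hsQ)
  rcases (hP.1 s hsP).1 with h | h <;> simp [hs] at h

theorem isPacking_cliqueBlock (hs : D.IsClique s) (h3 : s.card ≤ 3) :
    D.IsPacking (cliqueBlock s) := by
  unfold cliqueBlock
  split_ifs with h2
  · exact ⟨fun t ht => Finset.mem_singleton.1 ht ▸ ⟨by omega, hs⟩, by simp⟩
  · exact ⟨by simp, by simp⟩

-- Unconditional: for `s.card ≤ 1` both sides are `0` by truncated subtraction.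
theorem packValue_cliqueBlock (s : Finset ℕ) : packValue (cliqueBlock s) = s.card - 1 := by
  unfold cliqueBlock packValue
  split_ifs with h2
  · simp
  · rw [Finset.sum_empty]
    omega

theorem eq_of_mem_cliqueBlock {t : Finset ℕ} (ht : t ∈ cliqueBlock s) : t = s := by
  unfold cliqueBlock at ht
  split_ifs at ht
  · exact Finset.mem_singleton.1 ht
  · simp at ht

theorem IsPacking.sum_card_le (hP : D.IsPacking P) : ∑ s ∈ P, s.card ≤ D.verts.card := by
  rw [← Finset.card_biUnion fun s hs t ht hst => hP.2 hs ht hst]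
  exact Finset.card_le_card (Finset.biUnion_subset.2 fun s hs => (hP.1 s hs).2.1)

theorem IsPacking.packValue_le_card (hP : D.IsPacking P) : packValue P ≤ D.verts.card :=
  (Finset.sum_le_sum fun _ _ => Nat.sub_le _ _).trans hP.sum_card_le

theorem bddAbove_packValues (D : Dgr) :
    BddAbove {t | ∃ P : Finset (Finset ℕ), D.IsPacking P ∧ t = packValue P} :=
  ⟨D.verts.card, by rintro t ⟨P, hP, rfl⟩; exact hP.packValue_le_card⟩

theorem IsPacking.le_TT (hP : D.IsPacking P) : packValue P ≤ D.TT :=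
  le_csSup D.bddAbove_packValues ⟨P, hP, rfl⟩

theorem exists_isPacking_packValue_eq_TT (D : Dgr) :
    ∃ P : Finset (Finset ℕ), D.IsPacking P ∧ packValue P = D.TT := by
  have hne : {t | ∃ P : Finset (Finset ℕ), D.IsPacking P ∧ t = packValue P}.Nonempty :=
    ⟨0, ∅, ⟨by simp, by simp⟩, rfl⟩
  obtain ⟨P, hP, hT⟩ := Nat.sSup_mem hne D.bddAbove_packValues
  exact ⟨P, hP, hT.symm⟩

theorem three_mul_TT_le (D : Dgr) : 3 * D.TT ≤ 2 * D.verts.card := by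
  obtain ⟨P, hP, hT⟩ := D.exists_isPacking_packValue_eq_TT
  calc 3 * D.TT = ∑ s ∈ P, 3 * (s.card - 1) := by rw [← hT, packValue, Finset.mul_sum]
    _ ≤ ∑ s ∈ P, 2 * s.card :=
      Finset.sum_le_sum fun s hs => by rcases (hP.1 s hs).1 with h | h <;> omega
    _ ≤ 2 * D.verts.card := by rw [← Finset.mul_sum]; exact Nat.mul_le_mul_left 2 hP.sum_card_le

theorem IsPacking.exists_split (hP : D.IsPacking P) (v : ℕ) :
    ∃ R ⊆ P, ∃ B : Finset ℕ, (∀ s ∈ R, v ∉ s ∧ Disjoint s B) ∧ D.IsClique B ∧ v ∉ B ∧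
      B.card ≤ 2 ∧ (∀ b ∈ B, D.Adj v b) ∧ packValue P = packValue R + B.card := by
  by_cases hv : ∃ s ∈ P, v ∈ s
  · obtain ⟨s, hs, hvs⟩ := hv
    have hsR : ∀ t ∈ P.erase s, Disjoint t s := fun t ht =>
      hP.2 (Finset.mem_of_mem_erase ht) hs (Finset.ne_of_mem_erase ht)
    have hclique : D.IsClique s := (hP.1 s hs).2
    have hcard : (s.erase v).card = s.card - 1 := Finset.card_erase_of_mem hvs
    refine ⟨P.erase s, Finset.erase_subset s P, s.erase v, fun t ht => ⟨?_, ?_⟩,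
      hclique.subset (Finset.erase_subset v s), Finset.notMem_erase v s, ?_, ?_, ?_⟩
    · exact fun hvt => Finset.disjoint_left.1 (hsR t ht) hvt hvs
    · exact (hsR t ht).mono_right (Finset.erase_subset v s)
    · rcases (hP.1 s hs).1 with h | h <;> omega
    · exact fun b hb =>
        hclique.2 v hvs b (Finset.mem_of_mem_erase hb) (Finset.ne_of_mem_erase hb).symm
    · rw [hcard, packValue, packValue, ← Finset.sum_erase_add P _ hs]
  · simp only [not_exists, not_and] at hv
    exact ⟨P, subset_rfl, ∅, fun s hs => ⟨hv s hs, Finset.disjoint_empty_right s⟩,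
      ⟨by simp, by simp⟩, Finset.notMem_empty v, by simp, by simp, by simp⟩

theorem exists_isPacking_TT_le_packValue_add_one (hsub : (D'.del v).Subd D) :
    ∃ Q, D.IsPacking Q ∧ (∀ t ∈ Q, t ⊆ D'.verts) ∧ D'.TT ≤ packValue Q + 1 := by
  obtain ⟨P, hP, hPT⟩ := D'.exists_isPacking_packValue_eq_TT
  obtain ⟨R, hRP, B, hRB, hB, hvB, hB2, -, hval⟩ := hP.exists_split v
  have hR : D.IsPacking R := (hP.subset hRP).of_subd_del hsub fun s hs => (hRB s hs).1
  have hRB' : ∀ s ∈ R, ∀ t ∈ cliqueBlock B, Disjoint s t :=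
    fun s hs t ht => eq_of_mem_cliqueBlock ht ▸ (hRB s hs).2
  refine ⟨R ∪ cliqueBlock B, hR.union (isPacking_cliqueBlock (hB.of_subd_del hsub hvB) (by omega))
    hRB', fun t ht => ?_, ?_⟩
  · rcases Finset.mem_union.1 ht with ht | ht
    · exact (hP.1 t (hRP ht)).2.1
    · exact eq_of_mem_cliqueBlock ht ▸ hB.1
  · rw [packValue_union hR hRB', packValue_cliqueBlock]
    omega

theorem isPacking_cliqueBlock_insert (hA : D.IsClique A) (hA2 : A.card ≤ 2) (hx : x ∈ D.verts)
    (hadj : ∀ a ∈ A, D.Adj x a ∧ D.Adj a x) : D.IsPacking (cliqueBlock (insert x A)) :=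
  isPacking_cliqueBlock (hA.insert hx hadj) ((Finset.card_insert_le x A).trans (by omega))

theorem exists_isPacking_reroute {y : ℕ} {Z1 : Set ℕ} {B : Finset ℕ} (hB : D.IsClique B)
    (hBcard : B.card ≤ 2) (hx : x ∈ D.verts) (hy : y ∈ D.verts) (hxy : x ≠ y) (hxB : x ∉ B)
    (hyB : y ∉ B) (hX : ∀ a ∈ B, a ∈ Z1 → D.Adj x a ∧ D.Adj a x)
    (hY : ∀ a ∈ B, a ∉ Z1 → D.Adj y a ∧ D.Adj a y) :
    ∃ C, D.IsPacking C ∧ (∀ t ∈ C, t ⊆ insert x (insert y B)) ∧ packValue C = B.card := by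
  classical
  obtain ⟨B1, B2, hB1, hB2, hB12, hdisj, hB1Z, hB2Z⟩ : ∃ B1 B2 : Finset ℕ, B1 ⊆ B ∧ B2 ⊆ B ∧
      B1.card + B2.card = B.card ∧ Disjoint B1 B2 ∧ (∀ a ∈ B1, a ∈ Z1) ∧ ∀ a ∈ B2, a ∉ Z1 :=
    ⟨B.filter (· ∈ Z1), B.filter (· ∉ Z1), Finset.filter_subset _ _, Finset.filter_subset _ _,
      Finset.card_filter_add_card_filter_not _, Finset.disjoint_filter_filter_not B B _,
      fun a ha => (Finset.mem_filter.1 ha).2, fun a ha => (Finset.mem_filter.1 ha).2⟩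
  have hC12 : ∀ s ∈ cliqueBlock (insert x B1), ∀ t ∈ cliqueBlock (insert y B2), Disjoint s t := by
    intro s hs t ht
    rw [eq_of_mem_cliqueBlock hs, eq_of_mem_cliqueBlock ht, Finset.disjoint_insert_left,
      Finset.mem_insert, Finset.disjoint_insert_right]
    exact ⟨not_or.2 ⟨hxy, fun h => hxB (hB2 h)⟩, fun h => hyB (hB1 h), hdisj⟩
  have hC1 : D.IsPacking (cliqueBlock (insert x B1)) :=
    isPacking_cliqueBlock_insert (hB.subset hB1) ((Finset.card_le_card hB1).trans hBcard) hx
      fun a ha => hX a (hB1 ha) (hB1Z a ha)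
  have hC2 : D.IsPacking (cliqueBlock (insert y B2)) :=
    isPacking_cliqueBlock_insert (hB.subset hB2) ((Finset.card_le_card hB2).trans hBcard) hy
      fun a ha => hY a (hB2 ha) (hB2Z a ha)
  refine ⟨cliqueBlock (insert x B1) ∪ cliqueBlock (insert y B2), hC1.union hC2 hC12,
    fun t ht => ?_, ?_⟩
  · rcases Finset.mem_union.1 ht with ht | ht <;> rw [eq_of_mem_cliqueBlock ht]
    · exact Finset.insert_subset_insert x (hB1.trans (Finset.subset_insert y B))
    · exact (Finset.insert_subset_insert y hB2).trans (Finset.subset_insert x _)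
  · rw [packValue_union hC1 hC12, packValue_cliqueBlock, packValue_cliqueBlock,
      Finset.card_insert_of_notMem fun h => hxB (hB1 h),
      Finset.card_insert_of_notMem fun h => hyB (hB2 h)]
    omega

theorem exists_isPacking_TT_le_packValue_of_reroute {y : ℕ} {Z1 : Set ℕ}
    (hsub : (D'.del v).Subd D) (hx : x ∈ D.verts) (hy : y ∈ D.verts) (hxy : x ≠ y)
    (hxD' : x ∉ D'.verts) (hyD' : y ∉ D'.verts)
    (hX : ∀ a, D'.Adj v a → a ∈ Z1 → D.Adj x a ∧ D.Adj a x)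
    (hY : ∀ a, D'.Adj v a → a ∉ Z1 → D.Adj y a ∧ D.Adj a y) :
    ∃ Q, D.IsPacking Q ∧ (∀ t ∈ Q, t ⊆ insert x (insert y D'.verts)) ∧ D'.TT ≤ packValue Q := by
  obtain ⟨P, hP, hPT⟩ := D'.exists_isPacking_packValue_eq_TT
  obtain ⟨R, hRP, B, hRB, hB, hvB, hBcard, hvadj, hval⟩ := hP.exists_split v
  obtain ⟨C, hC, hCsub, hCval⟩ := exists_isPacking_reroute (hB.of_subd_del hsub hvB) hBcard
    hx hy hxy (fun h => hxD' (hB.1 h)) (fun h => hyD' (hB.1 h))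
    (fun a ha => hX a (hvadj a ha)) (fun a ha => hY a (hvadj a ha))
  have hR : D.IsPacking R := (hP.subset hRP).of_subd_del hsub fun s hs => (hRB s hs).1
  have hRC : ∀ s ∈ R, ∀ t ∈ C, Disjoint s t := by
    intro s hs t ht
    have hsD' : s ⊆ D'.verts := (hP.1 s (hRP hs)).2.1
    refine Disjoint.mono_right (hCsub t ht) ?_
    rw [Finset.disjoint_insert_right, Finset.disjoint_insert_right]
    exact ⟨fun h => hxD' (hsD' h), fun h => hyD' (hsD' h), (hRB s hs).2⟩
  refine ⟨R ∪ C, hR.union hC hRC, fun t ht => ?_, ?_⟩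
  · rcases Finset.mem_union.1 ht with ht | ht
    · exact (hP.1 t (hRP ht)).2.1.trans
        ((Finset.subset_insert _ _).trans (Finset.subset_insert _ _))
    · exact (hCsub t ht).trans (Finset.insert_subset_insert _
        (Finset.insert_subset_insert _ hB.1))
  · rw [packValue_union hR hRC, hCval, ← hPT, hval]

theorem IsOreComp.exists_subd_del (h : IsOreComp D1 D2 D) :
    ∃ x y z : ℕ, ∃ Z1 : Set ℕ, x ∈ D1.verts ∧ y ∈ D1.verts ∧ x ≠ y ∧ z ∈ D2.verts ∧
      D1.verts ⊆ D.verts ∧ (D1.del x).Subd D ∧ (D2.del z).Subd D ∧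
      (∀ a, D2.Adj z a → a ∈ Z1 → D.Adj x a ∧ D.Adj a x) ∧
      (∀ a, D2.Adj z a → a ∉ Z1 → D.Adj y a ∧ D.Adj a y) := by
  obtain ⟨-, hbi2, -, x, y, z, Z1, Z2, hx, hy, hxy, -, hz, hZ, -, -, -, hV, hA⟩ := h
  have hD1 : D1.verts ⊆ D.verts := hV ▸ Finset.subset_union_left
  refine ⟨x, y, z, Z1, hx, hy, hxy, hz, hD1, ⟨(Finset.erase_subset x _).trans hD1, ?_⟩,
    ⟨hV ▸ Finset.subset_union_right, ?_⟩, fun a ha hZ1 => ?_, fun a ha hZ1 => ?_⟩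
  · rintro u w ⟨huw, hux, hwx⟩
    exact (hA u w).2 (Or.inl ⟨huw, fun h => hux h.1, fun h => hwx h.2⟩)
  · rintro u w ⟨huw, huz, hwz⟩
    exact (hA u w).2 (Or.inr (Or.inl ⟨huw, huz, hwz⟩))
  · exact ⟨(hA x a).2 (Or.inr (Or.inr (Or.inl ⟨rfl, hZ1, ha⟩))),
      (hA a x).2 (Or.inr (Or.inr (Or.inr (Or.inl ⟨rfl, hZ1, hbi2 ha⟩))))⟩
  · have hZ2 : a ∈ Z2 := (show a ∈ Z1 ∪ Z2 from hZ ▸ ha).resolve_left hZ1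
    exact ⟨(hA y a).2 (Or.inr (Or.inr (Or.inr (Or.inr (Or.inl ⟨rfl, hZ2, ha⟩))))),
      (hA a y).2 (Or.inr (Or.inr (Or.inr (Or.inr (Or.inr ⟨rfl, hZ2, hbi2 ha⟩)))))⟩

theorem IsOreComp.TT_add_TT_le_TT_add_two (h : IsOreComp D1 D2 D) :
    D1.TT + D2.TT ≤ D.TT + 2 := by
  obtain ⟨_, _, _, _, -, -, -, -, -, hsub1, hsub2, -, -⟩ := h.exists_subd_del
  obtain ⟨Q1, hQ1, hQ1V, hT1⟩ := exists_isPacking_TT_le_packValue_add_one hsub1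
  obtain ⟨Q2, hQ2, hQ2V, hT2⟩ := exists_isPacking_TT_le_packValue_add_one hsub2
  have hQ12 : ∀ s ∈ Q1, ∀ t ∈ Q2, Disjoint s t :=
    fun s hs t ht => h.2.2.1.mono (hQ1V s hs) (hQ2V t ht)
  have hle := (hQ1.union hQ2 hQ12).le_TT
  rw [packValue_union hQ1 hQ12] at hle
  omega

theorem IsOreComp.TT_add_TT_le_TT_add_one_of_left (h : IsOreComp D1 D2 D)
    (hK : IsBidirComplete 4 D1) : D1.TT + D2.TT ≤ D.TT + 1 := by
  obtain ⟨x, y, _, _, hx, hy, hxy, -, hD1, hsub1, hsub2, hX, hY⟩ := h.exists_subd_del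
  have hdisj : Disjoint D1.verts D2.verts := h.2.2.1
  obtain ⟨Q, hQ, hQV, hT2⟩ := exists_isPacking_TT_le_packValue_of_reroute hsub2 (hD1 hx) (hD1 hy)
    hxy (Finset.disjoint_left.1 hdisj hx) (Finset.disjoint_left.1 hdisj hy) hX hY
  set W := (D1.verts.erase x).erase y
  have hWD1 : W ⊆ D1.verts := (Finset.erase_subset _ _).trans (Finset.erase_subset _ _)
  have hWx : x ∉ W := fun h => (Finset.mem_erase.1 (Finset.mem_of_mem_erase h)).1 rfl
  have hWcard : W.card = 2 := by
    rw [Finset.card_erase_of_mem (Finset.mem_erase.2 ⟨hxy.symm, hy⟩),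
      Finset.card_erase_of_mem hx, hK.1]
  have hW : D.IsClique W := (hK.isClique hWD1).of_subd_del hsub1 hWx
  have hQW : ∀ s ∈ Q, ∀ t ∈ cliqueBlock W, Disjoint s t := by
    intro s hs t ht
    rw [eq_of_mem_cliqueBlock ht]
    refine Disjoint.mono_left (hQV s hs) ?_
    rw [Finset.disjoint_insert_left, Finset.disjoint_insert_left]
    exact ⟨hWx, Finset.notMem_erase y _, hdisj.symm.mono_right hWD1⟩
  have hle := (hQ.union (isPacking_cliqueBlock hW (by omega)) hQW).le_TT
  rw [packValue_union hQ hQW, packValue_cliqueBlock, hWcard] at hle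
  have h3 := D1.three_mul_TT_le
  rw [hK.1] at h3
  omega

theorem IsOreComp.TT_add_TT_le_TT_add_one_of_right (h : IsOreComp D1 D2 D)
    (hK : IsBidirComplete 4 D2) : D1.TT + D2.TT ≤ D.TT + 1 := by
  obtain ⟨_, _, z, _, -, -, -, hz, -, hsub1, hsub2, -, -⟩ := h.exists_subd_del
  obtain ⟨Q, hQ, hQV, hT1⟩ := exists_isPacking_TT_le_packValue_add_one hsub1
  have hTcard : (D2.verts.erase z).card = 3 := by rw [Finset.card_erase_of_mem hz, hK.1]
  have hT : D.IsClique (D2.verts.erase z) :=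
    (hK.isClique (Finset.erase_subset z _)).of_subd_del hsub2 (Finset.notMem_erase z _)
  have hQT : ∀ s ∈ Q, ∀ t ∈ cliqueBlock (D2.verts.erase z), Disjoint s t :=
    fun s hs t ht => eq_of_mem_cliqueBlock ht ▸
      h.2.2.1.mono (hQV s hs) (Finset.erase_subset z _)
  have hle := (hQ.union (isPacking_cliqueBlock hT hTcard.le) hQT).le_TT
  rw [packValue_union hQ hQT, packValue_cliqueBlock, hTcard] at hle
  have h3 := D2.three_mul_TT_le
  rw [hK.1] at h3
  omega

end Dgr

/-- `T` under Ore-composition. -/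
theorem stmt_1 (D1 D2 D : Dgr) (h : Dgr.IsOreComp D1 D2 D) :
    D1.TT + D2.TT ≤ D.TT + 2 ∧
    ((Dgr.IsBidirComplete 4 D1 ∨ Dgr.IsBidirComplete 4 D2) →
      D1.TT + D2.TT ≤ D.TT + 1) :=
  ⟨h.TT_add_TT_le_TT_add_two, fun hK =>
    hK.elim h.TT_add_TT_le_TT_add_one_of_left h.TT_add_TT_le_TT_add_one_of_right⟩
end

section
/- Every 4-Ore digraph is 4-dicritical: its dichromatic number is 4, and every proper subdigraph has dichromatic number at most 3. -/
open Dgr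

/-!
All digraphs involved are bidirected, so dicolourings are proper colourings. By induction on the
construction we prove a property stronger than 4-criticality, `SplitCritical`: there is no proper
3-colouring, and for every vertex `v` and any three disjoint proper subsets `P₀, P₁, P₂` of its
neighbourhood, `D - v` has a proper 3-colouring in which `Pᵢ` avoids colour `i`. For `K₄` this is
a statement about permutations of `Fin 3`. In an Ore composition, a colouring of `D₁` giving `x`
and `y` different colours glues to a colouring of `D₂ - z` in which `Z₁` and `Z₂` avoid those two
colours (the split property of `D₂` at `z`), and a colouring of `D₂` glues to one of `D₁` giving
`x` and `y` the colour of `z`. With a single part, the split property yields for every digon a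
3-colouring in which only that digon is monochromatic, hence criticality.
-/

open Function

set_option maxRecDepth 4000 in
theorem Fin.exists_perm_forall_mem_ne (B : Fin 3 → Finset (Fin 3)) (hB : ∀ i, B i ≠ Finset.univ)
    (hBd : Pairwise (Disjoint on B)) : ∃ σ : Equiv.Perm (Fin 3), ∀ i, ∀ γ ∈ B i, σ γ ≠ i := by
  have key : ∀ B : Fin 3 → Finset (Fin 3), (∀ i, B i ≠ Finset.univ) →
      (∀ i j, i ≠ j → Disjoint (B i) (B j)) →
        ∃ σ : Equiv.Perm (Fin 3), ∀ i, ∀ γ ∈ B i, σ γ ≠ i := by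
    decide
  exact key B hB fun _ _ hij => hBd hij

namespace Dgr

variable {D : Dgr} {α : Type*}

def ProperOff (D : Dgr) (c : ℕ → α) (E : Set (Sym2 ℕ)) : Prop :=
  ∀ ⦃u v⦄, D.Adj u v → c u = c v → s(u, v) ∈ E

theorem ne_of_adj {u v : ℕ} (h : D.Adj u v) : u ≠ v :=
  fun huv => D.adj_irrefl u (huv ▸ h)

theorem ProperOff.delDigon {c : ℕ → α} {E F : Set (Sym2 ℕ)} {a b : ℕ} (h : D.ProperOff c E)
    (hE : E ⊆ insert s(a, b) F) : (D.delDigon a b).ProperOff c F := by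
  rintro u v ⟨huv, hab, hba⟩ hc
  refine (hE (h huv hc)).resolve_left fun he => ?_
  rcases Sym2.eq_iff.1 he with h' | h'
  exacts [hab h', hba h']

theorem ProperOff.del {c : ℕ → α} {E F : Set (Sym2 ℕ)} {z : ℕ} (h : D.ProperOff c E)
    (hE : E ⊆ {e | z ∈ e} ∪ F) : (D.del z).ProperOff c F := by
  rintro u v ⟨huv, hu, hv⟩ hc
  refine (hE (h huv hc)).resolve_left fun hz => ?_
  rcases Sym2.mem_iff.1 hz with rfl | rfl
  exacts [hu rfl, hv rfl]

theorem properOff_update (hD : Bidirected D) {c : ℕ → α} {E : Set (Sym2 ℕ)} {a : ℕ} {b : α}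
    (h : ∀ ⦃u v⦄, D.Adj u v → u ≠ a → v ≠ a → c u = c v → s(u, v) ∈ E)
    (ha : ∀ ⦃w⦄, D.Adj a w → b = c w → s(a, w) ∈ E) : D.ProperOff (update c a b) E := by
  intro u v huv hc
  by_cases hu : u = a
  · subst hu
    rw [update_self, update_of_ne (ne_of_adj huv).symm] at hc
    exact ha huv hc
  by_cases hv : v = a
  · subst hv
    rw [update_self, update_of_ne hu] at hc
    exact Sym2.eq_swap ▸ ha (hD huv) hc.symm
  rw [update_of_ne hu, update_of_ne hv] at hc
  exact h huv hu hv hc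

theorem acy_of_forall_eq {r : ℕ → ℕ → Prop} {a b : ℕ} (hab : a ≠ b)
    (h : ∀ u v, r u v → u = b ∧ v = a) : Acy r := by
  intro v hv
  obtain ⟨w, hvw, -⟩ := Relation.TransGen.head'_iff.mp hv
  obtain ⟨w', -, hw'v⟩ := Relation.TransGen.tail'_iff.mp hv
  exact hab ((h _ _ hw'v).2.symm.trans (h _ _ hvw).1)

theorem isDicol_of_forall_eq {k : ℕ} {c : ℕ → Fin k} {a b : ℕ} (hab : a ≠ b)
    (h : ∀ u v, D.Adj u v → c u = c v → u = b ∧ v = a) : D.IsDicol c :=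
  acy_of_forall_eq hab fun u v huv => h u v huv.1 huv.2

theorem ProperOff.isDicol {k : ℕ} {c : ℕ → Fin k} (h : D.ProperOff c ∅) : D.IsDicol c :=
  isDicol_of_forall_eq zero_ne_one fun _ _ huv hc => (h huv hc).elim

theorem IsDicol.properOff {k : ℕ} {c : ℕ → Fin k} (hD : Bidirected D) (h : D.IsDicol c) :
    D.ProperOff c ∅ := fun u _ huv hc =>
  h u (.head ⟨huv, hc⟩ (.single ⟨hD huv, hc.symm⟩))

theorem Dicolourable.mono {k m : ℕ} (h : D.Dicolourable k) (hkm : k ≤ m) :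
    D.Dicolourable m := by
  obtain ⟨c, hc⟩ := h
  exact ⟨Fin.castLE hkm ∘ c, fun v hv => hc v <| Relation.TransGen.mono
    (fun _ _ huv => ⟨huv.1, Fin.castLE_injective hkm huv.2⟩) v v hv⟩

theorem dichr_eq_succ {k : ℕ} (h : D.Dicolourable (k + 1)) (h' : ¬ D.Dicolourable k) :
    D.dichr = k + 1 :=
  (Nat.sInf_upward_closed_eq_succ_iff (fun _ _ hle hk => Dicolourable.mono hk hle) k).2 ⟨h, h'⟩

theorem dichr_le {k : ℕ} (h : D.Dicolourable k) : D.dichr ≤ k :=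
  Nat.sInf_le h

/-- Splitting `v` into a bidirected triangle `v₀ v₁ v₂`, with `vᵢ` joined to `P i`, leaves a
3-dicolourable digraph (colour `vᵢ` by `i`), for every choice of disjoint parts that are proper
subsets of the neighbourhood of `v`. -/
def SplitColourable (D : Dgr) (v : ℕ) : Prop :=
  ∀ P : Fin 3 → Set ℕ, (∀ i, P i ⊂ {w | D.Adj v w}) → Pairwise (Disjoint on P) →
    ∃ c : ℕ → Fin 3, D.ProperOff c {e | v ∈ e} ∧ ∀ i, ∀ w ∈ P i, c w ≠ i

structure SplitCritical (D : Dgr) : Prop where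
  bidirected : Bidirected D
  not_properOff : ∀ c : ℕ → Fin 3, ¬ D.ProperOff c ∅
  exists_adj : ∀ v ∈ D.verts, ∃ w, D.Adj v w
  splitColourable : ∀ v ∈ D.verts, D.SplitColourable v

namespace SplitCritical

theorem exists_properOff_digon (hD : D.SplitCritical) {a b : ℕ} (hab : D.Adj a b) (γ : Fin 3) :
    ∃ c : ℕ → Fin 3, D.ProperOff c {s(a, b)} ∧ c a = γ ∧ c b = γ := by
  obtain ⟨c, hc, hcP⟩ := hD.splitColourable a (D.adj_mem hab).1
    (fun i => {w | D.Adj a w ∧ w ≠ b ∧ i = γ})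
    (fun i => (Set.ssubset_iff_of_subset fun _ hw => hw.1).2 ⟨b, hab, fun hb => hb.2.1 rfl⟩)
    (fun i j hij => Set.disjoint_left.2 fun _ hi hj => hij (hi.2.2.trans hj.2.2.symm))
  have hc' : D.ProperOff (update c a γ) {s(a, b)} := by
    refine properOff_update hD.bidirected (fun u v huv hu hv hcuv => ?_) fun w haw hcw => ?_
    · rcases Sym2.mem_iff.1 (hc huv hcuv) with rfl | rfl
      exacts [(hu rfl).elim, (hv rfl).elim]
    · by_contra hwb
      exact hcP γ w ⟨haw, fun h => hwb (h ▸ rfl), rfl⟩ hcw.symm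
  refine ⟨_, hc', update_self .., ?_⟩
  by_contra hb
  refine hD.not_properOff (update c a γ) fun u v huv hcuv => ?_
  rcases Sym2.eq_iff.1 (hc' huv hcuv) with ⟨rfl, rfl⟩ | ⟨rfl, rfl⟩
  · exact hb (hcuv.symm.trans (update_self ..))
  · exact hb (hcuv.trans (update_self ..))

theorem dicolourable_four (hD : D.SplitCritical) : D.Dicolourable 4 := by
  obtain ⟨a, b, hab⟩ : ∃ a b, D.Adj a b := by
    by_contra! h
    exact hD.not_properOff (fun _ => 0) fun u v huv _ => (h u v huv).elim
  obtain ⟨c, hc, -⟩ := hD.exists_properOff_digon hab 0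
  refine ⟨update (Fin.castSucc ∘ c) a (Fin.last 3), ProperOff.isDicol <|
    properOff_update hD.bidirected (fun u v huv hu hv hcuv => ?_) fun w _ hw => ?_⟩
  · rcases Sym2.eq_iff.1 (hc huv (Fin.castSucc_injective _ hcuv)) with ⟨rfl, -⟩ | ⟨-, rfl⟩
    exacts [hu rfl, hv rfl]
  · exact Fin.castSucc_ne_last _ hw.symm

theorem dicolourable_three_of_properSubd (hD : D.SplitCritical) {H : Dgr} (hH : H.ProperSubd D) :
    H.Dicolourable 3 := by
  obtain ⟨⟨hV, hA⟩, hHD⟩ := hH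
  by_cases hV' : D.verts ⊆ H.verts
  · obtain ⟨a, b, hab, hnab⟩ : ∃ a b, D.Adj a b ∧ ¬ H.Adj a b := by
      by_contra! h
      exact hHD ⟨hV', h⟩
    obtain ⟨c, hc, -⟩ := hD.exists_properOff_digon hab 0
    refine ⟨c, isDicol_of_forall_eq (ne_of_adj hab) fun u v huv hcuv => ?_⟩
    rcases Sym2.eq_iff.1 (hc (hA huv) hcuv) with ⟨rfl, rfl⟩ | h
    · exact absurd huv hnab
    · exact h
  · obtain ⟨t, ht, htH⟩ := Finset.not_subset.1 hV'
    obtain ⟨a, hta⟩ := hD.exists_adj t ht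
    obtain ⟨c, hc, -⟩ := hD.exists_properOff_digon hta 0
    refine ⟨c, ProperOff.isDicol fun u v huv hcuv => htH ?_⟩
    have ht' : t ∈ s(u, v) := (hc (hA huv) hcuv : s(u, v) = s(t, a)) ▸ Sym2.mem_mk_left t a
    rcases Sym2.mem_iff.1 ht' with rfl | rfl
    exacts [(H.adj_mem huv).1, (H.adj_mem huv).2]

theorem dicritical (hD : D.SplitCritical) : Dicritical 4 D := by
  refine ⟨dichr_eq_succ hD.dicolourable_four fun ⟨c, hc⟩ => ?_, fun H hH => ?_⟩
  · exact hD.not_properOff c (hc.properOff hD.bidirected)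
  · exact (dichr_le (hD.dicolourable_three_of_properSubd hH)).trans_lt (by norm_num)

theorem exists_colouring_avoiding (hD : D.SplitCritical) {z : ℕ} (hz : z ∈ D.verts)
    {Z₁ Z₂ : Set ℕ} (hZ : Z₁ ∪ Z₂ = {w | D.Adj z w}) (hZd : Disjoint Z₁ Z₂)
    (hZ₂ : Z₂.Nonempty) {S : Fin 3 → Set ℕ} (hS : Pairwise (Disjoint on S)) {β : Fin 3}
    (hβ : ¬ Z₁ ⊆ S β) :
    ∃ c : ℕ → Fin 3, D.ProperOff c {e | z ∈ e} ∧ (∀ i, ∀ w ∈ Z₁ ∩ S i, c w ≠ i) ∧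
      ∀ w ∈ Z₂, c w ≠ β := by
  have hR : ∀ i, {w | w ∈ Z₁ ∧ w ∈ S i ∨ w ∈ Z₂ ∧ i = β} ⊂ {w | D.Adj z w} := by
    intro i
    rw [← hZ, Set.ssubset_iff_of_subset (by rintro w (⟨h, -⟩ | ⟨h, -⟩) <;> simp [h])]
    rcases eq_or_ne i β with rfl | hi
    · obtain ⟨w, hw, hwS⟩ := Set.not_subset.1 hβ
      exact ⟨w, .inl hw, by
        rintro (⟨-, h⟩ | ⟨h, -⟩)
        exacts [hwS h, Set.disjoint_left.1 hZd hw h]⟩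
    · obtain ⟨w, hw⟩ := hZ₂
      exact ⟨w, .inr hw, by
        rintro (⟨h, -⟩ | ⟨-, h⟩)
        exacts [Set.disjoint_right.1 hZd hw h, hi h]⟩
  obtain ⟨c, hc, hcR⟩ := hD.splitColourable z hz _ hR fun i j hij => by
    refine Set.disjoint_left.2 ?_
    rintro w (⟨h₁, hi⟩ | ⟨h₂, rfl⟩) (⟨h₁', hj⟩ | ⟨h₂', rfl⟩)
    · exact Set.disjoint_left.1 (hS hij) hi hj
    · exact Set.disjoint_left.1 hZd h₁ h₂'
    · exact Set.disjoint_left.1 hZd h₁' h₂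
    · exact hij rfl
  exact ⟨c, hc, fun i w hw => hcR i w (.inl hw), fun w hw => hcR β w (.inr ⟨hw, rfl⟩)⟩

end SplitCritical

theorem IsBidirComplete.adj_iff {n : ℕ} (h : IsBidirComplete n D) {u v : ℕ} :
    D.Adj u v ↔ u ∈ D.verts ∧ v ∈ D.verts ∧ u ≠ v :=
  ⟨fun huv => ⟨(D.adj_mem huv).1, (D.adj_mem huv).2, ne_of_adj huv⟩,
    fun ⟨hu, hv, huv⟩ => h.2 u hu v hv huv⟩

theorem IsBidirComplete.splitColourable (h : IsBidirComplete 4 D) {v : ℕ} (hv : v ∈ D.verts) :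
    D.SplitColourable v := by
  classical
  intro P hP hPd
  set N := D.verts.erase v
  have hN : {w | D.Adj v w} = ↑N := by
    ext w
    simp [N, h.adj_iff, hv, and_comm, eq_comm]
  -- number the three neighbours of `v`, then permute the numbering to avoid the parts
  let e : N ≃ Fin 3 := Finset.equivFinOfCardEq (by rw [Finset.card_erase_of_mem hv, h.1])
  let c₀ : ℕ → Fin 3 := fun w => if hw : w ∈ N then e ⟨w, hw⟩ else 0
  have hc₀ : ∀ ⦃u w⦄, u ∈ N → w ∈ N → c₀ u = c₀ w → u = w := by
    intro u w hu hw huw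
    simpa [c₀, hu, hw] using huw
  have hPN : ∀ i, P i ⊆ N := fun i => hN ▸ (hP i).subset
  let B : Fin 3 → Finset (Fin 3) := fun i => {γ | ∃ w ∈ P i, c₀ w = γ}
  obtain ⟨σ, hσ⟩ := Fin.exists_perm_forall_mem_ne B
    (fun i hBi => by
      obtain ⟨t, ht, htP⟩ := Set.exists_of_ssubset (hP i)
      rw [hN] at ht
      obtain ⟨w, hw, hwt⟩ := Finset.mem_filter.1 (hBi ▸ Finset.mem_univ (c₀ t)) |>.2
      exact htP (hc₀ (hPN i hw) ht hwt ▸ hw))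
    (fun i j hij => Finset.disjoint_left.2 fun γ hγi hγj => by
      obtain ⟨w, hw, rfl⟩ := (Finset.mem_filter.1 hγi).2
      obtain ⟨w', hw', hww'⟩ := (Finset.mem_filter.1 hγj).2
      exact Set.disjoint_left.1 (hPd hij) hw (hc₀ (hPN j hw') (hPN i hw) hww' ▸ hw'))
  refine ⟨σ ∘ c₀, fun u w huw hc => ?_,
    fun i w hw => hσ i _ (Finset.mem_filter.2 ⟨Finset.mem_univ _, w, hw, rfl⟩)⟩
  obtain ⟨hu, hw, hne⟩ := h.adj_iff.1 huw
  by_contra hv'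
  simp only [Set.mem_ofPred_eq, Sym2.mem_iff, not_or] at hv'
  exact hne (hc₀ (Finset.mem_erase.2 ⟨Ne.symm hv'.1, hu⟩) (Finset.mem_erase.2 ⟨Ne.symm hv'.2, hw⟩)
    (σ.injective hc))

theorem IsBidirComplete.splitCritical (h : IsBidirComplete 4 D) : D.SplitCritical where
  bidirected _ _ huv := by
    obtain ⟨hu, hv, hne⟩ := h.adj_iff.1 huv
    exact h.adj_iff.2 ⟨hv, hu, hne.symm⟩
  not_properOff c hc := by
    obtain ⟨u, hu, v, hv, hne, huv⟩ := Finset.exists_ne_map_eq_of_card_lt_of_maps_to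
      (s := D.verts) (t := Finset.univ) (by simp [h.1]) fun a _ => Finset.mem_univ (c a)
    exact hc (h.2 u hu v hv hne) huv
  exists_adj v hv := by
    obtain ⟨w, hw, hwv⟩ := D.verts.exists_mem_ne (by rw [h.1]; norm_num) v
    exact ⟨w, h.2 v hv w hw hwv.symm⟩
  splitColourable _ := h.splitColourable

/-- `IsOreComp` unpacked, without the redundant conditions `D₂.Adj z v` on the cross arcs. -/
structure OreSplit (D₁ D₂ D : Dgr) (x y z : ℕ) (Z₁ Z₂ : Set ℕ) : Prop where
  bidirected₁ : Bidirected D₁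
  bidirected₂ : Bidirected D₂
  disjoint : Disjoint D₁.verts D₂.verts
  adj_xy : D₁.Adj x y
  z_mem : z ∈ D₂.verts
  union_eq : Z₁ ∪ Z₂ = {w | D₂.Adj z w}
  disjoint_Z : Disjoint Z₁ Z₂
  nonempty₁ : Z₁.Nonempty
  nonempty₂ : Z₂.Nonempty
  verts_eq : D.verts = D₁.verts ∪ D₂.verts.erase z
  adj_iff : ∀ u v, D.Adj u v ↔ (D₁.delDigon x y).Adj u v ∨ (D₂.del z).Adj u v ∨
    (u = x ∧ v ∈ Z₁) ∨ (v = x ∧ u ∈ Z₁) ∨ (u = y ∧ v ∈ Z₂) ∨ (v = y ∧ u ∈ Z₂)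

theorem IsOreComp.exists_oreSplit {D₁ D₂ D : Dgr} (h : IsOreComp D₁ D₂ D) :
    ∃ x y z Z₁ Z₂, OreSplit D₁ D₂ D x y z Z₁ Z₂ := by
  obtain ⟨hb₁, hb₂, hd, x, y, z, Z₁, Z₂, -, -, -, hxy, hz, hZ, hZd, hZ₁, hZ₂, hV, hA⟩ := h
  have h₁ : ∀ w ∈ Z₁, D₂.Adj z w := fun w hw => hZ.subset (.inl hw)
  have h₂ : ∀ w ∈ Z₂, D₂.Adj z w := fun w hw => hZ.subset (.inr hw)
  refine ⟨x, y, z, Z₁, Z₂, hb₁, hb₂, hd, hxy, hz, hZ, hZd, hZ₁, hZ₂, hV, fun u v => ?_⟩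
  rw [hA]
  refine or_congr Iff.rfl (or_congr Iff.rfl (or_congr ?_ (or_congr ?_ (or_congr ?_ ?_)))) <;>
    refine and_congr_right fun _ => and_iff_left_of_imp fun hw => ?_
  exacts [h₁ v hw, hb₂ (h₁ u hw), h₂ v hw, hb₂ (h₂ u hw)]

namespace OreSplit

variable {D₁ D₂ D : Dgr} {x y z : ℕ} {Z₁ Z₂ : Set ℕ} {v w : ℕ}

theorem symm (h : OreSplit D₁ D₂ D x y z Z₁ Z₂) : OreSplit D₁ D₂ D y x z Z₂ Z₁ where
  bidirected₁ := h.bidirected₁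
  bidirected₂ := h.bidirected₂
  disjoint := h.disjoint
  adj_xy := h.bidirected₁ h.adj_xy
  z_mem := h.z_mem
  union_eq := Set.union_comm Z₂ Z₁ ▸ h.union_eq
  disjoint_Z := h.disjoint_Z.symm
  nonempty₁ := h.nonempty₂
  nonempty₂ := h.nonempty₁
  verts_eq := h.verts_eq
  adj_iff u v := by
    rw [h.adj_iff, show (D₁.delDigon y x).Adj u v ↔ (D₁.delDigon x y).Adj u v from
      and_congr_right fun _ => and_comm]
    tauto

theorem x_mem (h : OreSplit D₁ D₂ D x y z Z₁ Z₂) : x ∈ D₁.verts := (D₁.adj_mem h.adj_xy).1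

theorem notMem₂_of_mem₁ (h : OreSplit D₁ D₂ D x y z Z₁ Z₂) (hv : v ∈ D₁.verts) :
    v ∉ D₂.verts :=
  Finset.disjoint_left.1 h.disjoint hv

theorem x_notMem (h : OreSplit D₁ D₂ D x y z Z₁ Z₂) : x ∉ D₂.verts :=
  h.notMem₂_of_mem₁ h.x_mem

theorem adj_z_of_mem (h : OreSplit D₁ D₂ D x y z Z₁ Z₂) (hw : w ∈ Z₁) : D₂.Adj z w :=
  h.union_eq.subset (.inl hw)

theorem mem_of_mem_Z₁ (h : OreSplit D₁ D₂ D x y z Z₁ Z₂) (hw : w ∈ Z₁) : w ∈ D₂.verts :=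
  (D₂.adj_mem (h.adj_z_of_mem hw)).2

theorem adj_x_of_mem (h : OreSplit D₁ D₂ D x y z Z₁ Z₂) (hw : w ∈ Z₁) : D.Adj x w :=
  (h.adj_iff x w).2 (.inr (.inr (.inl ⟨rfl, hw⟩)))

theorem bidirected (h : OreSplit D₁ D₂ D x y z Z₁ Z₂) : Bidirected D := by
  intro u v huv
  rw [h.adj_iff] at huv ⊢
  rcases huv with ⟨huv, hxy, hyx⟩ | ⟨huv, hu, hv⟩ | huv
  · exact .inl ⟨h.bidirected₁ huv, fun e => hyx e.symm, fun e => hxy e.symm⟩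
  · exact .inr (.inl ⟨h.bidirected₂ huv, hv, hu⟩)
  · tauto

theorem adj_x_iff (h : OreSplit D₁ D₂ D x y z Z₁ Z₂) : D.Adj x w ↔ D₁.Adj x w ∧ w ≠ y ∨ w ∈ Z₁ := by
  rw [h.adj_iff]
  constructor
  · rintro (⟨hxw, hxy, -⟩ | ⟨hxw, -⟩ | ⟨-, hw⟩ | ⟨-, hx⟩ | ⟨hxy, -⟩ | ⟨-, hx⟩)
    · exact .inl ⟨hxw, fun hwy => hxy ⟨rfl, hwy⟩⟩
    · exact (h.x_notMem (D₂.adj_mem hxw).1).elim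
    · exact .inr hw
    · exact (h.x_notMem (h.mem_of_mem_Z₁ hx)).elim
    · exact (ne_of_adj h.adj_xy hxy).elim
    · exact (h.x_notMem (h.symm.mem_of_mem_Z₁ hx)).elim
  · rintro (⟨hxw, hwy⟩ | hw)
    · exact .inl ⟨hxw, fun e => hwy e.2, fun e => ne_of_adj h.adj_xy e.1⟩
    · exact .inr (.inr (.inl ⟨rfl, hw⟩))

theorem adj_iff_of_mem₁ (h : OreSplit D₁ D₂ D x y z Z₁ Z₂) (hv : v ∈ D₁.verts) (hvx : v ≠ x)
    (hvy : v ≠ y) : D.Adj v w ↔ D₁.Adj v w := by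
  rw [h.adj_iff]
  constructor
  · rintro (⟨hvw, -⟩ | ⟨hvw, -⟩ | ⟨rfl, -⟩ | ⟨-, hv'⟩ | ⟨rfl, -⟩ | ⟨-, hv'⟩)
    · exact hvw
    · exact (h.notMem₂_of_mem₁ hv (D₂.adj_mem hvw).1).elim
    · exact (hvx rfl).elim
    · exact (h.notMem₂_of_mem₁ hv (h.mem_of_mem_Z₁ hv')).elim
    · exact (hvy rfl).elim
    · exact (h.notMem₂_of_mem₁ hv (h.symm.mem_of_mem_Z₁ hv')).elim
  · exact fun hvw => .inl ⟨hvw, fun e => hvx e.1, fun e => hvy e.1⟩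

theorem adj_iff_of_mem₂ (h : OreSplit D₁ D₂ D x y z Z₁ Z₂) (hv : v ∈ D₂.verts) (hvz : v ≠ z)
    (hv₂ : v ∉ Z₂) : D.Adj v w ↔ D₂.Adj v w ∧ w ≠ z ∨ w = x ∧ v ∈ Z₁ := by
  rw [h.adj_iff]
  constructor
  · rintro (⟨hvw, -⟩ | ⟨hvw, -, hwz⟩ | ⟨rfl, -⟩ | ⟨rfl, hv₁⟩ | ⟨rfl, -⟩ | ⟨-, hv₂'⟩)
    · exact (h.notMem₂_of_mem₁ (D₁.adj_mem hvw).1 hv).elim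
    · exact .inl ⟨hvw, hwz⟩
    · exact (h.x_notMem hv).elim
    · exact .inr ⟨rfl, hv₁⟩
    · exact (h.symm.x_notMem hv).elim
    · exact (hv₂ hv₂').elim
  · rintro (⟨hvw, hwz⟩ | ⟨rfl, hv₁⟩)
    · exact .inr (.inl ⟨hvw, hvz, hwz⟩)
    · exact .inr (.inr (.inr (.inl ⟨rfl, hv₁⟩)))

theorem exists_adj (h : OreSplit D₁ D₂ D x y z Z₁ Z₂) (h₁ : D₁.SplitCritical)
    (h₂ : D₂.SplitCritical) (hv : v ∈ D.verts) : ∃ w, D.Adj v w := by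
  rcases Finset.mem_union.1 (h.verts_eq ▸ hv) with hv₁ | hv₂
  · by_cases hvx : v = x
    · obtain ⟨w, hw⟩ := h.nonempty₁
      exact ⟨w, hvx ▸ h.adj_x_of_mem hw⟩
    by_cases hvy : v = y
    · obtain ⟨w, hw⟩ := h.nonempty₂
      exact ⟨w, hvy ▸ h.symm.adj_x_of_mem hw⟩
    obtain ⟨w, hvw⟩ := h₁.exists_adj v hv₁
    exact ⟨w, (h.adj_iff_of_mem₁ hv₁ hvx hvy).2 hvw⟩
  · obtain ⟨hvz, hv₂⟩ := Finset.mem_erase.1 hv₂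
    obtain ⟨w, hvw⟩ := h₂.exists_adj v hv₂
    by_cases hwz : w = z
    · subst hwz
      rcases h.union_eq.symm.subset (h.bidirected₂ hvw) with hv' | hv'
      exacts [⟨x, h.bidirected (h.adj_x_of_mem hv')⟩, ⟨y, h.bidirected (h.symm.adj_x_of_mem hv')⟩]
    · exact ⟨w, (h.adj_iff v w).2 (.inr (.inl ⟨hvw, hvz, hwz⟩))⟩

theorem not_properOff (h : OreSplit D₁ D₂ D x y z Z₁ Z₂) (h₁ : D₁.SplitCritical)
    (h₂ : D₂.SplitCritical) (c : ℕ → Fin 3) : ¬ D.ProperOff c ∅ := by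
  intro hc
  by_cases hxy : c x = c y
  · -- then `c` with `z` coloured `c x` is a proper colouring of `D₂`
    refine h₂.not_properOff (update c z (c x)) <| properOff_update h.bidirected₂
      (fun u v huv hu hv hcuv => hc ((h.adj_iff u v).2 (.inr (.inl ⟨huv, hu, hv⟩))) hcuv)
      fun w hzw hcw => ?_
    rcases h.union_eq.symm.subset hzw with hw | hw
    exacts [(hc (h.adj_x_of_mem hw) hcw).elim,
      (hc (h.symm.adj_x_of_mem hw) (hxy.symm.trans hcw)).elim]
  · refine h₁.not_properOff c fun u v huv hcuv => ?_
    by_cases hd : ¬(u = x ∧ v = y) ∧ ¬(u = y ∧ v = x)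
    · exact hc ((h.adj_iff u v).2 (.inl ⟨huv, hd⟩)) hcuv
    · rcases not_and_or.1 hd with hd | hd <;> obtain ⟨rfl, rfl⟩ := not_not.1 hd
      exacts [(hxy hcuv).elim, (hxy hcuv.symm).elim]

theorem properOff_piecewise (h : OreSplit D₁ D₂ D x y z Z₁ Z₂) {E : Set (Sym2 ℕ)}
    {c₁ c₂ : ℕ → α} (h₁ : (D₁.delDigon x y).ProperOff c₁ E) (h₂ : (D₂.del z).ProperOff c₂ E)
    (hx : ∀ w ∈ Z₁, c₁ x = c₂ w → s(x, w) ∈ E) (hy : ∀ w ∈ Z₂, c₁ y = c₂ w → s(y, w) ∈ E) :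
    D.ProperOff ((D₂.verts : Set ℕ).piecewise c₂ c₁) E := by
  have e₁ : ∀ w ∈ D₁.verts, (D₂.verts : Set ℕ).piecewise c₂ c₁ w = c₁ w :=
    fun w hw => Set.piecewise_eq_of_notMem _ _ _ (h.notMem₂_of_mem₁ hw)
  have e₂ : ∀ w ∈ D₂.verts, (D₂.verts : Set ℕ).piecewise c₂ c₁ w = c₂ w :=
    fun w hw => Set.piecewise_eq_of_mem _ _ _ hw
  intro u v huv hc
  rcases (h.adj_iff u v).1 huv with huv | huv | ⟨rfl, hv⟩ | ⟨rfl, hu⟩ | ⟨rfl, hv⟩ | ⟨rfl, hu⟩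
  · rw [e₁ u (D₁.adj_mem huv.1).1, e₁ v (D₁.adj_mem huv.1).2] at hc
    exact h₁ huv hc
  · rw [e₂ u (D₂.adj_mem huv.1).1, e₂ v (D₂.adj_mem huv.1).2] at hc
    exact h₂ huv hc
  · rw [e₁ _ h.x_mem, e₂ v (h.mem_of_mem_Z₁ hv)] at hc
    exact hx v hv hc
  · rw [e₁ _ h.x_mem, e₂ u (h.mem_of_mem_Z₁ hu)] at hc
    exact Sym2.eq_swap ▸ hx u hu hc.symm
  · rw [e₁ _ h.symm.x_mem, e₂ v (h.symm.mem_of_mem_Z₁ hv)] at hc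
    exact hy v hv hc
  · rw [e₁ _ h.symm.x_mem, e₂ u (h.symm.mem_of_mem_Z₁ hu)] at hc
    exact Sym2.eq_swap ▸ hy u hu hc.symm

theorem properOff_piecewise_of_eq (h : OreSplit D₁ D₂ D x y z Z₁ Z₂) {E : Set (Sym2 ℕ)}
    {c₁ c₂ : ℕ → α} (h₁ : D₁.ProperOff c₁ {s(x, y)}) (hx : c₁ x = c₂ z) (hy : c₁ y = c₂ z)
    (h₂ : D₂.ProperOff c₂ E) (hE : ∀ w, s(z, w) ∈ E → s(x, w) ∈ E ∧ s(y, w) ∈ E) :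
    D.ProperOff ((D₂.verts : Set ℕ).piecewise c₂ c₁) E :=
  h.properOff_piecewise (h₁.delDigon (Set.singleton_subset_iff.2 (Set.mem_insert _ _)))
    (h₂.del Set.subset_union_right)
    (fun w hw hc => (hE w (h₂ (h.adj_z_of_mem hw) (hx ▸ hc))).1)
    (fun w hw hc => (hE w (h₂ (h.symm.adj_z_of_mem hw) (hy ▸ hc))).2)

theorem splitColourable_of_mem₁ (h : OreSplit D₁ D₂ D x y z Z₁ Z₂) (h₁ : D₁.SplitCritical)
    (h₂ : D₂.SplitCritical) (hv : v ∈ D₁.verts) (hvx : v ≠ x) (hvy : v ≠ y) :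
    D.SplitColourable v := by
  intro P hP hPd
  have hN : {w | D.Adj v w} = {w | D₁.Adj v w} :=
    Set.ext fun _ => h.adj_iff_of_mem₁ hv hvx hvy
  obtain ⟨c₁, hc₁, hc₁P⟩ := h₁.splitColourable v hv P (hN ▸ hP) hPd
  have hxy : c₁ x ≠ c₁ y := fun hc => by
    rcases Sym2.mem_iff.1 (hc₁ h.adj_xy hc) with rfl | rfl
    exacts [hvx rfl, hvy rfl]
  obtain ⟨c₂, hc₂, hc₂Z₁, hc₂Z₂⟩ := h₂.exists_colouring_avoiding h.z_mem h.union_eq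
    h.disjoint_Z h.nonempty₂ (S := fun i => {_w | i = c₁ x})
    (fun i j hij => Set.disjoint_left.2 fun _ hi hj => hij (hi.trans hj.symm)) (β := c₁ y)
    fun hsub => hxy (hsub h.nonempty₁.some_mem).symm
  refine ⟨_, h.properOff_piecewise (hc₁.delDigon (Set.subset_insert _ _))
    (hc₂.del Set.subset_union_left) (fun w hw hc => (hc₂Z₁ _ w ⟨hw, rfl⟩ hc.symm).elim)
    (fun w hw hc => (hc₂Z₂ w hw hc.symm).elim), fun i w hw => ?_⟩
  have hw₁ : w ∈ {w | D₁.Adj v w} := hN ▸ (hP i).subset hw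
  rw [Set.piecewise_eq_of_notMem _ _ _ (h.notMem₂_of_mem₁ (D₁.adj_mem hw₁).2)]
  exact hc₁P i w hw

theorem splitColourable_x (h : OreSplit D₁ D₂ D x y z Z₁ Z₂) (h₁ : D₁.SplitCritical)
    (h₂ : D₂.SplitCritical) : D.SplitColourable x := by
  intro P hP hPd
  have hyP : ∀ i, y ∉ P i := fun i hy => by
    rcases h.adj_x_iff.1 ((hP i).subset hy) with ⟨-, hne⟩ | hy₁
    exacts [hne rfl, h.symm.x_notMem (h.mem_of_mem_Z₁ hy₁)]
  -- `y` joins the part containing all of `Z₁`, if there is one, which forces `c₁ y` to differ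
  -- from that part's colour
  let Q : Fin 3 → Set ℕ := fun i => {w | D₁.Adj x w ∧ (w ∈ P i ∨ w = y ∧ Z₁ ⊆ P i)}
  have hQ : ∀ i, Q i ⊂ {w | D₁.Adj x w} := by
    intro i
    refine (Set.ssubset_iff_of_subset fun w hw => hw.1).2 ?_
    by_contra! hsub
    refine (hP i).2 fun w hw => ?_
    rcases h.adj_x_iff.1 hw with ⟨hxw, hwy⟩ | hw₁
    · rcases (hsub w hxw).2 with hwP | ⟨rfl, -⟩
      exacts [hwP, (hwy rfl).elim]
    · rcases (hsub y h.adj_xy).2 with hyP' | ⟨-, hZ⟩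
      exacts [(hyP i hyP').elim, hZ hw₁]
  have hQd : Pairwise (Disjoint on Q) := fun i j hij => Set.disjoint_left.2 fun w hi hj => by
    rcases hi.2 with hwi | ⟨rfl, hZi⟩ <;> rcases hj.2 with hwj | ⟨hwy, hZj⟩
    · exact Set.disjoint_left.1 (hPd hij) hwi hwj
    · exact hyP i (hwy ▸ hwi)
    · exact hyP j hwj
    · exact Set.disjoint_left.1 (hPd hij) (hZi h.nonempty₁.some_mem) (hZj h.nonempty₁.some_mem)
  obtain ⟨c₁, hc₁, hc₁Q⟩ := h₁.splitColourable x h.x_mem Q hQ hQd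
  obtain ⟨c₂, hc₂, hc₂Z₁, hc₂Z₂⟩ := h₂.exists_colouring_avoiding h.z_mem h.union_eq
    h.disjoint_Z h.nonempty₂ hPd fun hZ => hc₁Q (c₁ y) y ⟨h.adj_xy, .inr ⟨rfl, hZ⟩⟩ rfl
  refine ⟨_, h.properOff_piecewise (hc₁.delDigon (Set.subset_insert _ _))
    (hc₂.del Set.subset_union_left) (fun w _ _ => Sym2.mem_mk_left x w)
    (fun w hw hc => (hc₂Z₂ w hw hc.symm).elim), fun i w hw => ?_⟩
  rcases h.adj_x_iff.1 ((hP i).subset hw) with ⟨hxw, -⟩ | hw₁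
  · rw [Set.piecewise_eq_of_notMem _ _ _ (h.notMem₂_of_mem₁ (D₁.adj_mem hxw).2)]
    exact hc₁Q i w ⟨hxw, .inl hw⟩
  · rw [Set.piecewise_eq_of_mem _ _ _ (h.mem_of_mem_Z₁ hw₁)]
    exact hc₂Z₁ i w ⟨hw₁, hw⟩

theorem splitColourable_of_mem₂ (h : OreSplit D₁ D₂ D x y z Z₁ Z₂) (h₁ : D₁.SplitCritical)
    (h₂ : D₂.SplitCritical) (hv : v ∈ D₂.verts) (hvz : v ≠ z) (hv₂ : v ∉ Z₂) :
    D.SplitColourable v := by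
  intro P hP hPd
  have hN : ∀ {w}, D.Adj v w ↔ D₂.Adj v w ∧ w ≠ z ∨ w = x ∧ v ∈ Z₁ :=
    h.adj_iff_of_mem₂ hv hvz hv₂
  have hzP : ∀ i, z ∉ P i := fun i hz => by
    rcases hN.1 ((hP i).subset hz) with ⟨-, hzz⟩ | ⟨rfl, -⟩
    exacts [hzz rfl, h.x_notMem h.z_mem]
  -- in `D₂` the vertex `z` stands for `x`
  let P' : Fin 3 → Set ℕ := fun i => {w | D₂.Adj v w ∧ (w ∈ P i ∨ w = z ∧ x ∈ P i)}
  have hP' : ∀ i, P' i ⊂ {w | D₂.Adj v w} := by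
    intro i
    refine (Set.ssubset_iff_of_subset fun w hw => hw.1).2 ?_
    by_contra! hsub
    refine (hP i).2 fun w hw => ?_
    rcases hN.1 hw with ⟨hvw, hwz⟩ | ⟨rfl, hv₁⟩
    · rcases (hsub w hvw).2 with hwP | ⟨hwz', -⟩
      exacts [hwP, (hwz hwz').elim]
    · rcases (hsub z (h.bidirected₂ (h.adj_z_of_mem hv₁))).2 with hzP' | ⟨-, hxP⟩
      exacts [(hzP i hzP').elim, hxP]
  have hP'd : Pairwise (Disjoint on P') := fun i j hij => Set.disjoint_left.2 fun w hi hj => by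
    rcases hi.2 with hwi | ⟨rfl, hxi⟩ <;> rcases hj.2 with hwj | ⟨hwz, hxj⟩
    · exact Set.disjoint_left.1 (hPd hij) hwi hwj
    · exact hzP i (hwz ▸ hwi)
    · exact hzP j hwj
    · exact Set.disjoint_left.1 (hPd hij) hxi hxj
  obtain ⟨c₂, hc₂, hc₂P⟩ := h₂.splitColourable v hv P' hP' hP'd
  obtain ⟨c₁, hc₁, hc₁x, hc₁y⟩ := h₁.exists_properOff_digon h.adj_xy (c₂ z)
  refine ⟨_, h.properOff_piecewise_of_eq hc₁ hc₁x hc₁y hc₂ fun w hw => ?_, fun i w hw => ?_⟩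
  · rcases Sym2.mem_iff.1 hw with rfl | rfl
    exacts [(hvz rfl).elim, ⟨Sym2.mem_mk_right x _, Sym2.mem_mk_right y _⟩]
  · rcases hN.1 ((hP i).subset hw) with ⟨hvw, -⟩ | ⟨rfl, hv₁⟩
    · rw [Set.piecewise_eq_of_mem _ _ _ (D₂.adj_mem hvw).2]
      exact hc₂P i w ⟨hvw, .inl hw⟩
    · rw [Set.piecewise_eq_of_notMem _ _ _ h.x_notMem, hc₁x]
      exact hc₂P i z ⟨h.bidirected₂ (h.adj_z_of_mem hv₁), .inr ⟨rfl, hw⟩⟩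

theorem splitColourable (h : OreSplit D₁ D₂ D x y z Z₁ Z₂) (h₁ : D₁.SplitCritical)
    (h₂ : D₂.SplitCritical) (hv : v ∈ D.verts) : D.SplitColourable v := by
  rcases Finset.mem_union.1 (h.verts_eq ▸ hv) with hv₁ | hv₂
  · by_cases hvx : v = x
    · exact hvx ▸ h.splitColourable_x h₁ h₂
    by_cases hvy : v = y
    · exact hvy ▸ h.symm.splitColourable_x h₁ h₂
    exact h.splitColourable_of_mem₁ h₁ h₂ hv₁ hvx hvy
  · obtain ⟨hvz, hv₂⟩ := Finset.mem_erase.1 hv₂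
    by_cases hvZ : v ∈ Z₂
    · exact h.symm.splitColourable_of_mem₂ h₁ h₂ hv₂ hvz (Set.disjoint_right.1 h.disjoint_Z hvZ)
    · exact h.splitColourable_of_mem₂ h₁ h₂ hv₂ hvz hvZ

theorem splitCritical (h : OreSplit D₁ D₂ D x y z Z₁ Z₂) (h₁ : D₁.SplitCritical)
    (h₂ : D₂.SplitCritical) : D.SplitCritical where
  bidirected := h.bidirected
  not_properOff := h.not_properOff h₁ h₂
  exists_adj _ := h.exists_adj h₁ h₂
  splitColourable _ := h.splitColourable h₁ h₂

end OreSplit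

end Dgr

theorem IsOre4.splitCritical {D : Dgr} (h : IsOre4 D) : D.SplitCritical := by
  induction h with
  | k4 D hD => exact hD.splitCritical
  | comp D₁ D₂ D _ _ hC ih₁ ih₂ =>
    obtain ⟨x, y, z, Z₁, Z₂, h⟩ := hC.exists_oreSplit
    exact h.splitCritical ih₁ ih₂

/-- every 4-Ore digraph is 4-dicritical. -/
theorem stmt_3 (D : Dgr) (h : IsOre4 D) : Dgr.Dicritical 4 D :=
  h.splitCritical.dicritical
end

section
/- If D is a 4-Ore digraph and v is a vertex of D, then D contains either an Ore-collapsible induced subdigraph disjoint from v, or an emerald disjoint from v. -/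
open Dgr

/-!
Induction along the construction of `D`. In the bidirected `K₄` any three vertices other than `v`
form an emerald. Let `D` be the Ore-composition of `D1` (whose digon `[x, y]` is removed) and `D2`
(whose vertex `z` is split). If `v ∉ D1`, then `D1` itself is Ore-collapsible in `D`, with
boundary `{x, y}`. If `v ∈ D1`, the induction hypothesis for `D2` at `z` gives an Ore-collapsible
set or an emerald inside `D2 - z`. The composition leaves the adjacencies inside `D2 - z` alone and
only reattaches the edges at `z` to `x` or `y`, so boundaries and degrees of vertices of `D2 - z`
are unchanged and the configuration survives in `D`.
-/

namespace Dgr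

theorem ext {A B : Dgr} (hV : A.verts = B.verts) (hA : ∀ u v, A.Adj u v ↔ B.Adj u v) :
    A = B := by
  cases A; cases B
  simp only [mk.injEq] at hV ⊢
  exact ⟨hV, funext₂ fun u v => propext (hA u v)⟩

theorem Bidirected.deg_eq {D : Dgr} (hD : D.Bidirected) (v : ℕ) :
    D.deg v = 2 * {u | D.Adj v u}.ncard := by
  have hin : {u | D.Adj u v} = {u | D.Adj v u} := Set.ext fun _ => ⟨(hD ·), (hD ·)⟩
  rw [deg, hin, two_mul]

theorem Bidirected.mem_bdry_iff {D : Dgr} (hD : D.Bidirected) {S : Finset ℕ} {a : ℕ} :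
    a ∈ D.bdry S ↔ a ∈ S ∧ ∃ u ∉ S, D.Adj a u := by
  constructor
  · rintro ⟨haS, u, -, huS, hua | hau⟩
    exacts [⟨haS, u, huS, hD hua⟩, ⟨haS, u, huS, hau⟩]
  · rintro ⟨haS, u, huS, hau⟩
    exact ⟨haS, u, (D.adj_mem hau).2, huS, Or.inr hau⟩

theorem IsBidirComplete.bidirected {D : Dgr} {n : ℕ} (hD : D.IsBidirComplete n) :
    D.Bidirected := fun u v huv =>
  hD.2 v (D.adj_mem huv).2 u (D.adj_mem huv).1 fun e => D.adj_irrefl u (e ▸ huv)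

theorem IsBidirComplete.deg_eq {D : Dgr} {n : ℕ} (hD : D.IsBidirComplete n) {v : ℕ}
    (hv : v ∈ D.verts) : D.deg v = 2 * (n - 1) := by
  have hout : {u | D.Adj v u} = ↑(D.verts.erase v) := by
    ext u
    simp only [Set.mem_ofPred_eq, Finset.coe_erase, Set.mem_sdiff, Finset.mem_coe,
      Set.mem_singleton_iff]
    exact ⟨fun h => ⟨(D.adj_mem h).2, fun e => D.adj_irrefl v (e ▸ h)⟩,
      fun h => hD.2 v hv u h.1 (Ne.symm h.2)⟩
  rw [hD.bidirected.deg_eq, hout, Set.ncard_coe_finset, Finset.card_erase_of_mem hv, hD.1]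

theorem IsBidirComplete.exists_isEmerald_notMem {D : Dgr} (hD : D.IsBidirComplete 4)
    (v : ℕ) : ∃ s, D.IsEmerald s ∧ v ∉ s := by
  have hcard : 3 ≤ (D.verts.erase v).card := by
    simpa [hD.1] using Finset.pred_card_le_card_erase (s := D.verts) (a := v)
  obtain ⟨s, hsv, hs⟩ := Finset.exists_subset_card_eq hcard
  have hsD : s ⊆ D.verts := hsv.trans (Finset.erase_subset v D.verts)
  exact ⟨s, ⟨hs, hsD, fun a ha b hb => hD.2 a (hsD ha) b (hsD hb),
    fun w hw => hD.deg_eq (hsD hw)⟩, fun hv => Finset.notMem_erase v _ (hsv hv)⟩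

/-- `IsOreComp` with its witnesses named, so that statements can refer to them. -/
structure OreComposition (D1 D2 D : Dgr) where
  x : ℕ
  y : ℕ
  z : ℕ
  Z1 : Set ℕ
  Z2 : Set ℕ
  bidirected_left : D1.Bidirected
  bidirected_right : D2.Bidirected
  disjoint : Disjoint D1.verts D2.verts
  x_mem : x ∈ D1.verts
  y_mem : y ∈ D1.verts
  x_ne_y : x ≠ y
  adj_xy : D1.Adj x y
  z_mem : z ∈ D2.verts
  union_eq : Z1 ∪ Z2 = {w | D2.Adj z w}
  disjoint_Z : Disjoint Z1 Z2
  Z1_nonempty : Z1.Nonempty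
  Z2_nonempty : Z2.Nonempty
  verts_eq : D.verts = D1.verts ∪ D2.verts.erase z
  adj_iff : ∀ u v, D.Adj u v ↔
    (D1.Adj u v ∧ ¬(u = x ∧ v = y) ∧ ¬(u = y ∧ v = x)) ∨
    (D2.Adj u v ∧ u ≠ z ∧ v ≠ z) ∨
    (u = x ∧ v ∈ Z1 ∧ D2.Adj z v) ∨ (v = x ∧ u ∈ Z1 ∧ D2.Adj u z) ∨
    (u = y ∧ v ∈ Z2 ∧ D2.Adj z v) ∨ (v = y ∧ u ∈ Z2 ∧ D2.Adj u z)

theorem IsOreComp.nonempty_oreComposition {D1 D2 D : Dgr} (h : IsOreComp D1 D2 D) :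
    Nonempty (OreComposition D1 D2 D) := by
  obtain ⟨hb1, hb2, hdisj, x, y, z, Z1, Z2, hx, hy, hxy, hAxy, hz, hZ, hZdisj, hZ1, hZ2, hV,
    hA⟩ := h
  exact ⟨⟨x, y, z, Z1, Z2, hb1, hb2, hdisj, hx, hy, hxy, hAxy, hz, hZ, hZdisj, hZ1, hZ2, hV,
    hA⟩⟩

namespace OreComposition

variable {D1 D2 D : Dgr} (c : OreComposition D1 D2 D)

theorem notMem_right (c : OreComposition D1 D2 D) {a : ℕ} (ha : a ∈ D1.verts) :
    a ∉ D2.verts :=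
  Finset.disjoint_left.1 c.disjoint ha

theorem notMem_left (c : OreComposition D1 D2 D) {a : ℕ} (ha : a ∈ D2.verts) :
    a ∉ D1.verts :=
  fun h => c.notMem_right h ha

theorem x_notMem_right : c.x ∉ D2.verts := c.notMem_right c.x_mem

theorem y_notMem_right : c.y ∉ D2.verts := c.notMem_right c.y_mem

theorem mem_Z_iff (w : ℕ) : w ∈ c.Z1 ∪ c.Z2 ↔ D2.Adj c.z w := by
  rw [c.union_eq]; rfl

theorem Z_subset : c.Z1 ∪ c.Z2 ⊆ D2.verts.erase c.z := fun w hw => by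
  have hzw := (c.mem_Z_iff w).1 hw
  exact Finset.mem_erase.2 ⟨fun e => D2.adj_irrefl _ (e ▸ hzw), (D2.adj_mem hzw).2⟩

theorem notMem_left_of_mem_Z {w : ℕ} (hw : w ∈ c.Z1 ∪ c.Z2) : w ∉ D1.verts :=
  c.notMem_left (Finset.mem_of_mem_erase (c.Z_subset hw))

theorem left_subset (c : OreComposition D1 D2 D) : D1.verts ⊆ D.verts :=
  c.verts_eq ▸ Finset.subset_union_left

theorem erase_subset : D2.verts.erase c.z ⊆ D.verts := c.verts_eq ▸ Finset.subset_union_right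

theorem bidirected (c : OreComposition D1 D2 D) : D.Bidirected := by
  intro a b hab
  rw [c.adj_iff] at hab ⊢
  have h1 := @c.bidirected_left
  have h2 := @c.bidirected_right
  rcases hab with ⟨h, hn1, hn2⟩ | ⟨h, ha, hb⟩ | ⟨rfl, hb, h⟩ | ⟨rfl, ha, h⟩ |
    ⟨rfl, hb, h⟩ | ⟨rfl, ha, h⟩
  · exact Or.inl ⟨h1 h, fun ⟨e1, e2⟩ => hn2 ⟨e2, e1⟩,
      fun ⟨e1, e2⟩ => hn1 ⟨e2, e1⟩⟩
  · exact Or.inr (Or.inl ⟨h2 h, hb, ha⟩)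
  · exact Or.inr (Or.inr (Or.inr (Or.inl ⟨rfl, hb, h2 h⟩)))
  · exact Or.inr (Or.inr (Or.inl ⟨rfl, ha, h2 h⟩))
  · exact Or.inr (Or.inr (Or.inr (Or.inr (Or.inr ⟨rfl, hb, h2 h⟩))))
  · exact Or.inr (Or.inr (Or.inr (Or.inr (Or.inl ⟨rfl, ha, h2 h⟩))))

theorem adj_iff_of_mem_left {a u : ℕ} (ha : a ∈ D1.verts) :
    D.Adj a u ↔ (D1.Adj a u ∧ ¬(a = c.x ∧ u = c.y) ∧ ¬(a = c.y ∧ u = c.x)) ∨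
      (a = c.x ∧ u ∈ c.Z1) ∨ (a = c.y ∧ u ∈ c.Z2) := by
  have h2 : ¬ D2.Adj a u := fun h => c.notMem_right ha (D2.adj_mem h).1
  have hZ1 : a ∉ c.Z1 := fun h => c.notMem_left_of_mem_Z (.inl h) ha
  have hZ2 : a ∉ c.Z2 := fun h => c.notMem_left_of_mem_Z (.inr h) ha
  have hz1 : u ∈ c.Z1 → D2.Adj c.z u := fun h => (c.mem_Z_iff u).1 (Or.inl h)
  have hz2 : u ∈ c.Z2 → D2.Adj c.z u := fun h => (c.mem_Z_iff u).1 (Or.inr h)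
  rw [c.adj_iff]
  constructor
  · rintro (h | h | ⟨hx, hu, -⟩ | ⟨-, ha, -⟩ | ⟨hy, hu, -⟩ | ⟨-, ha, -⟩)
    exacts [Or.inl h, (h2 h.1).elim, Or.inr (Or.inl ⟨hx, hu⟩), (hZ1 ha).elim,
      Or.inr (Or.inr ⟨hy, hu⟩), (hZ2 ha).elim]
  · rintro (h | ⟨hx, hu⟩ | ⟨hy, hu⟩)
    exacts [Or.inl h, Or.inr (Or.inr (Or.inl ⟨hx, hu, hz1 hu⟩)),
      Or.inr (Or.inr (Or.inr (Or.inr (Or.inl ⟨hy, hu, hz2 hu⟩))))]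

theorem adj_iff_of_mem_right {w u : ℕ} (hw : w ∈ D2.verts.erase c.z) :
    D.Adj w u ↔ (D2.Adj w u ∧ u ≠ c.z) ∨ (u = c.x ∧ w ∈ c.Z1 ∧ D2.Adj w c.z) ∨
      (u = c.y ∧ w ∈ c.Z2 ∧ D2.Adj w c.z) := by
  obtain ⟨hwz, hw2⟩ := Finset.mem_erase.1 hw
  have h1 : ¬ D1.Adj w u := fun h => c.notMem_right (D1.adj_mem h).1 hw2
  have hx : w ≠ c.x := fun e => c.x_notMem_right (e ▸ hw2)
  have hy : w ≠ c.y := fun e => c.y_notMem_right (e ▸ hw2)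
  rw [c.adj_iff]
  tauto

theorem bdry_left : D.bdry D1.verts = {c.x, c.y} := by
  ext a
  rw [c.bidirected.mem_bdry_iff, Set.mem_insert_iff, Set.mem_singleton_iff]
  constructor
  · rintro ⟨ha, u, hu, hau⟩
    rcases (c.adj_iff_of_mem_left ha).1 hau with ⟨h, -⟩ | ⟨hx, -⟩ | ⟨hy, -⟩
    exacts [(hu (D1.adj_mem h).2).elim, Or.inl hx, Or.inr hy]
  · rintro (rfl | rfl)
    · obtain ⟨w, hw⟩ := c.Z1_nonempty
      exact ⟨c.x_mem, w, c.notMem_left_of_mem_Z (.inl hw),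
        (c.adj_iff_of_mem_left c.x_mem).2 (.inr (.inl ⟨rfl, hw⟩))⟩
    · obtain ⟨w, hw⟩ := c.Z2_nonempty
      exact ⟨c.y_mem, w, c.notMem_left_of_mem_Z (.inr hw),
        (c.adj_iff_of_mem_left c.y_mem).2 (.inr (.inr ⟨rfl, hw⟩))⟩

theorem induce_left_addDigon : (D.induce D1.verts).addDigon c.x c.y = D1 := by
  have hV : (D.induce D1.verts).verts = D1.verts := Finset.inter_eq_right.2 c.left_subset
  refine ext hV fun a b => ?_
  change (D.Adj a b ∧ a ∈ D1.verts ∧ b ∈ D1.verts) ∨ (c.x ≠ c.y ∧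
    c.x ∈ (D.induce D1.verts).verts ∧ c.y ∈ (D.induce D1.verts).verts ∧
      ((a = c.x ∧ b = c.y) ∨ (a = c.y ∧ b = c.x))) ↔ D1.Adj a b
  rw [hV]
  constructor
  · rintro (⟨h, ha, hb⟩ | ⟨-, -, -, ⟨rfl, rfl⟩ | ⟨rfl, rfl⟩⟩)
    · have hbZ : b ∉ c.Z1 ∪ c.Z2 := fun h => c.notMem_left_of_mem_Z h hb
      rcases (c.adj_iff_of_mem_left ha).1 h with ⟨h, -⟩ | ⟨-, hb'⟩ | ⟨-, hb'⟩
      exacts [h, (hbZ (.inl hb')).elim, (hbZ (.inr hb')).elim]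
    · exact c.adj_xy
    · exact c.bidirected_left c.adj_xy
  · intro h
    obtain ⟨ha, hb⟩ := D1.adj_mem h
    by_cases hd : (a = c.x ∧ b = c.y) ∨ (a = c.y ∧ b = c.x)
    · exact Or.inr ⟨c.x_ne_y, c.x_mem, c.y_mem, hd⟩
    · exact Or.inl ⟨(c.adj_iff_of_mem_left ha).2 (.inl ⟨h, fun h' => hd (.inl h'),
        fun h' => hd (.inr h')⟩), ha, hb⟩

theorem oreCollapsible_left (c : OreComposition D1 D2 D) (h1 : IsOre4 D1) :
    D.OreCollapsible D1.verts := by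
  obtain ⟨w, hw⟩ := c.Z1_nonempty
  refine ⟨c.left_subset, Finset.card_lt_card ⟨c.left_subset, fun h =>
    c.notMem_left_of_mem_Z (.inl hw) (h (c.erase_subset (c.Z_subset (.inl hw))))⟩,
    c.x, c.y, c.x_ne_y, c.bdry_left, ?_⟩
  rw [c.induce_left_addDigon]
  exact h1

theorem adj_iff_adj_right {a b : ℕ} (ha : a ∈ D2.verts.erase c.z)
    (hb : b ∈ D2.verts.erase c.z) : D.Adj a b ↔ D2.Adj a b := by
  obtain ⟨hbz, hb2⟩ := Finset.mem_erase.1 hb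
  have hx : b ≠ c.x := fun e => c.x_notMem_right (e ▸ hb2)
  have hy : b ≠ c.y := fun e => c.y_notMem_right (e ▸ hb2)
  rw [c.adj_iff_of_mem_right ha]
  tauto

theorem induce_eq_of_subset_right {S : Finset ℕ} (hS : S ⊆ D2.verts.erase c.z) :
    D.induce S = D2.induce S := by
  refine ext ?_ fun a b => ?_
  · change D.verts ∩ S = D2.verts ∩ S
    rw [Finset.inter_eq_right.2 (hS.trans c.erase_subset),
      Finset.inter_eq_right.2 (hS.trans (Finset.erase_subset _ _))]
  · exact and_congr_left fun ⟨ha, hb⟩ => c.adj_iff_adj_right (hS ha) (hS hb)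

theorem bdry_eq_of_subset_right {S : Finset ℕ} (hS : S ⊆ D2.verts.erase c.z) :
    D.bdry S = D2.bdry S := by
  ext a
  rw [c.bidirected.mem_bdry_iff, c.bidirected_right.mem_bdry_iff]
  refine and_congr_right fun ha => ?_
  have hzS : c.z ∉ S := fun h => Finset.notMem_erase _ _ (hS h)
  have hadj := fun u => c.adj_iff_of_mem_right (u := u) (hS ha)
  constructor
  · rintro ⟨u, hu, hau⟩
    rcases (hadj u).1 hau with ⟨h, -⟩ | ⟨-, -, h⟩ | ⟨-, -, h⟩
    exacts [⟨u, hu, h⟩, ⟨c.z, hzS, h⟩, ⟨c.z, hzS, h⟩]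
  · rintro ⟨u, hu, hau⟩
    by_cases huz : u = c.z
    · subst huz
      rcases (c.mem_Z_iff a).2 (c.bidirected_right hau) with haZ | haZ
      · exact ⟨c.x, fun h => c.x_notMem_right (Finset.mem_of_mem_erase (hS h)),
          (hadj c.x).2 (.inr (.inl ⟨rfl, haZ, hau⟩))⟩
      · exact ⟨c.y, fun h => c.y_notMem_right (Finset.mem_of_mem_erase (hS h)),
          (hadj c.y).2 (.inr (.inr ⟨rfl, haZ, hau⟩))⟩
    · exact ⟨u, hu, (hadj u).2 (.inl ⟨hau, huz⟩)⟩

/-- `t` is the end of the digon to which the edge `wz` of `D2`, if present, is reattached. -/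
theorem setOf_adj_eq_image_swap {w t : ℕ} (hw : w ∈ D2.verts.erase c.z)
    (ht : (t = c.x ∧ w ∉ c.Z2) ∨ (t = c.y ∧ w ∉ c.Z1)) :
    {u | D.Adj w u} = Equiv.swap c.z t '' {u | D2.Adj w u} := by
  have hZ : D2.Adj w c.z → w ∈ c.Z1 ∪ c.Z2 := fun h =>
    (c.mem_Z_iff w).2 (c.bidirected_right h)
  have hxz : c.x ≠ c.z := fun e => c.x_notMem_right (e ▸ c.z_mem)
  have hyz : c.y ≠ c.z := fun e => c.y_notMem_right (e ▸ c.z_mem)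
  have hD2x : ¬ D2.Adj w c.x := fun h => c.x_notMem_right (D2.adj_mem h).2
  have hD2y : ¬ D2.Adj w c.y := fun h => c.y_notMem_right (D2.adj_mem h).2
  have hxy := c.x_ne_y
  ext u
  rw [Equiv.image_eq_preimage_symm, Equiv.symm_swap, Set.mem_preimage, Set.mem_ofPred_eq,
    Set.mem_ofPred_eq, c.adj_iff_of_mem_right hw, Equiv.swap_apply_def]
  rcases ht with ⟨rfl, hw2⟩ | ⟨rfl, hw1⟩ <;> split_ifs <;> grind

theorem deg_eq_of_mem_right {w : ℕ} (hw : w ∈ D2.verts.erase c.z) : D.deg w = D2.deg w := by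
  obtain ⟨t, ht⟩ : ∃ t, (t = c.x ∧ w ∉ c.Z2) ∨ (t = c.y ∧ w ∉ c.Z1) := by
    by_cases h : w ∈ c.Z1
    exacts [⟨c.x, .inl ⟨rfl, Set.disjoint_left.1 c.disjoint_Z h⟩⟩,
      ⟨c.y, .inr ⟨rfl, h⟩⟩]
  rw [c.bidirected.deg_eq, c.bidirected_right.deg_eq, c.setOf_adj_eq_image_swap hw ht,
    Set.ncard_image_of_injective _ (Equiv.swap c.z t).injective]

theorem oreCollapsible_of_right {S : Finset ℕ} (hS : D2.OreCollapsible S) (hz : c.z ∉ S) :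
    D.OreCollapsible S := by
  obtain ⟨hS2, -, u, v, huv, hbdry, hOre⟩ := hS
  have hS' : S ⊆ D2.verts.erase c.z := Finset.subset_erase.2 ⟨hS2, hz⟩
  refine ⟨hS'.trans c.erase_subset, Finset.card_lt_card ⟨hS'.trans c.erase_subset,
    fun h => c.x_notMem_right (hS2 (h (c.left_subset c.x_mem)))⟩, u, v, huv, ?_, ?_⟩
  · rw [c.bdry_eq_of_subset_right hS', hbdry]
  · rw [c.induce_eq_of_subset_right hS']
    exact hOre

theorem isEmerald_of_right {s : Finset ℕ} (hs : D2.IsEmerald s) (hz : c.z ∉ s) :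
    D.IsEmerald s := by
  obtain ⟨hcard, hs2, hadj, hdeg⟩ := hs
  have hs' : s ⊆ D2.verts.erase c.z := Finset.subset_erase.2 ⟨hs2, hz⟩
  refine ⟨hcard, hs'.trans c.erase_subset, fun a ha b hb hab => ?_, fun w hw => ?_⟩
  · exact (c.adj_iff_adj_right (hs' ha) (hs' hb)).2 (hadj a ha b hb hab)
  · rw [c.deg_eq_of_mem_right (hs' hw), hdeg w hw]

end OreComposition

end Dgr

theorem stmt_6_general (D : Dgr) (h : IsOre4 D) (v : ℕ) :
    (∃ S : Finset ℕ, D.OreCollapsible S ∧ v ∉ S) ∨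
    (∃ s : Finset ℕ, D.IsEmerald s ∧ v ∉ s) := by
  induction h generalizing v with
  | k4 D hD => exact Or.inr (hD.exists_isEmerald_notMem v)
  | comp D1 D2 D h1 _ hc _ ih2 =>
    obtain ⟨c⟩ := hc.nonempty_oreComposition
    by_cases hv : v ∈ D1.verts
    · have hvS : ∀ {S : Finset ℕ}, S ⊆ D2.verts → v ∉ S := fun hS hvS =>
        c.notMem_right hv (hS hvS)
      rcases ih2 c.z with ⟨S, hS, hzS⟩ | ⟨s, hs, hzs⟩
      · exact Or.inl ⟨S, c.oreCollapsible_of_right hS hzS, hvS hS.1⟩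
      · exact Or.inr ⟨s, c.isEmerald_of_right hs hzs, hvS hs.2.1⟩
    · exact Or.inl ⟨D1.verts, c.oreCollapsible_left h1, hv⟩

/-- a 4-Ore digraph contains, for every vertex `v`, an
Ore-collapsible subdigraph or an emerald disjoint from `v`. -/
theorem stmt_6 (D : Dgr) (h : IsOre4 D) (v : ℕ) (hv : v ∈ D.verts) :
    (∃ S : Finset ℕ, D.OreCollapsible S ∧ v ∉ S) ∨
    (∃ s : Finset ℕ, D.IsEmerald s ∧ v ∉ s) :=
  stmt_6_general D h v
end
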